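/- (Theorem 4.2: conditional convergence of the one-dimensional explicit scheme, 0 < γ < 1.) Let γ ∈ (0,1), α ∈ (1,2], integers N ≥ 2 and N_t ≥ 1, reals τ > 0 and Δx > 0, nonnegative reals c_{i,k} (1 ≤ i ≤ N-1, 0 ≤ k ≤ N_t - 1) with c_{i,k} ≤ C_max, and assume the stability condition 4·(-κ_α)·C_max·Γ(2-γ)·(1-2^{1-α})·τ^γ ≤ Γ(4-α)·(1-2^{-γ})·(Δx)^α. Set σ_{i,k} = -Γ(2-γ)·τ^γ·κ_α·c_{i,k}/(Γ(4-α)·(Δx)^α) ≥ 0. Let R^k_i (1 ≤ i ≤ N-1, 1 ≤ k ≤ N_t) be reals with R_max = max_{i,k} |R^k_i|. Suppose real numbers ε^k_i satisfy ε^0_i = 0 for all i, ε^k_0 = ε^k_N = 0 for 1 ≤ k ≤ N_t, ε^1_i = R^1_i for 1 ≤ i ≤ N-1, and for all 1 ≤ i ≤ N-1 and 1 ≤ k ≤ N_t - 1: ε^{k+1}_i = (1 - l_1 + σ_{i,k}·g^{α,N}_{i,i})·ε^k_i + Σ_{s=1}^{k-1}(l_s - l_{s+1})·ε^{k-s}_i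 + σ_{i,k}·Σ_{m=0, m≠i}^{N} g^{α,N}_{i,m}·ε^k_m + R^{k+1}_i. Then for every 1 ≤ k ≤ N_t: max_{0≤i≤N} |ε^k_i| ≤ R_max / l_{k-1} ≤ (k^γ/(1-γ))·R_max. In particular, if T > 0, N_t·τ ≤ T and |R^k_i| ≤ C·τ^γ·(τ^{2-γ} + (Δx)^2) for all i, k, then max_{0≤i≤N} |ε^k_i| ≤ (C·T^γ/(1-γ))·(τ^{2-γ} + (Δx)^2) for all k. -/

import Mathlib

/-- The coefficients `a^ν_{j,m}` of the second-order discretization of the left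
Riemann–Liouville fractional derivative. All powers are real powers. -/
noncomputable def aCoef (ν : ℝ) (j m : ℕ) : ℝ :=
  if m = j then 1
  else if m = 0 then ((j : ℝ) - 1) ^ (3 - ν) - (j : ℝ) ^ (2 - ν) * ((j : ℝ) - 3 + ν)
  else ((j : ℝ) - (m : ℝ) + 1) ^ (3 - ν) - 2 * ((j : ℝ) - (m : ℝ)) ^ (3 - ν)
    + ((j : ℝ) - (m : ℝ) - 1) ^ (3 - ν)

/-- The coefficients `b^ν_{j,m}` of the second-order discretization of the right
Riemann–Liouville fractional derivative on a grid with `N` subintervals. -/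
noncomputable def bCoef (ν : ℝ) (N j m : ℕ) : ℝ :=
  if m = j then 1
  else if m = N then (3 - ν - (N : ℝ) + (j : ℝ)) * ((N : ℝ) - (j : ℝ)) ^ (2 - ν)
    + ((N : ℝ) - (j : ℝ) - 1) ^ (3 - ν)
  else ((m : ℝ) - (j : ℝ) + 1) ^ (3 - ν) - 2 * ((m : ℝ) - (j : ℝ)) ^ (3 - ν)
    + ((m : ℝ) - (j : ℝ) - 1) ^ (3 - ν)

/-- The coefficients `p^ν_{i,m}` (left-derivative part), for `1 ≤ i ≤ N-1`. -/
noncomputable def pCoef (ν : ℝ) (i m : ℕ) : ℝ :=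
  if m < i then aCoef ν (i - 1) m - 2 * aCoef ν i m + aCoef ν (i + 1) m
  else if m = i then -2 * aCoef ν i i + aCoef ν (i + 1) i
  else if m = i + 1 then aCoef ν (i + 1) (i + 1)
  else 0

/-- The coefficients `q^ν_{i,m}` (right-derivative part), for `1 ≤ i ≤ N-1`. -/
noncomputable def qCoef (ν : ℝ) (N i m : ℕ) : ℝ :=
  if m + 1 < i then 0
  else if m + 1 = i then bCoef ν N (i - 1) (i - 1)
  else if m = i then -2 * bCoef ν N i i + bCoef ν N (i - 1) i
  else bCoef ν N (i - 1) m - 2 * bCoef ν N i m + bCoef ν N (i + 1) m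

/-- The Riesz-derivative difference coefficients `g^{ν,N}_{i,m} = p^ν_{i,m} + q^ν_{i,m}`. -/
noncomputable def gCoef (ν : ℝ) (N i m : ℕ) : ℝ := pCoef ν i m + qCoef ν N i m

/-- The L1 coefficients `l_s = (s+1)^(1-γ) - s^(1-γ)` of the Caputo discretization. -/
noncomputable def lCoef (γ : ℝ) (s : ℕ) : ℝ := ((s : ℝ) + 1) ^ (1 - γ) - (s : ℝ) ^ (1 - γ)

/-- The Riesz constant `κ_ν = 1 / (2 cos(νπ/2))`. -/
noncomputable def kappa (ν : ℝ) : ℝ := 1 / (2 * Real.cos (ν * Real.pi / 2))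

/-- The maximum of `|v i|` over `0 ≤ i ≤ N`. -/
noncomputable def maxAbs (N : ℕ) (v : ℕ → ℝ) : ℝ :=
  (Finset.range (N + 1)).sup' Finset.nonempty_range_add_one fun i => |v i|

/-- The maximum of `|v i j|` over `0 ≤ i ≤ Nx`, `0 ≤ j ≤ Ny`. -/
noncomputable def maxAbs2 (Nx Ny : ℕ) (v : ℕ → ℕ → ℝ) : ℝ :=
  ((Finset.range (Nx + 1)) ×ˢ (Finset.range (Ny + 1))).sup'
    (Finset.nonempty_range_add_one.product Finset.nonempty_range_add_one) fun p => |v p.1 p.2|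

/-!
Off the diagonal, the Riesz coefficients `g_{i,m}` of an interior row depend only on `|i - m|` and
are fourth forward differences of `|x| ^ (3 - α)`; their sums telescope to a third difference, so the
off-diagonal entries are nonnegative with total at most `-g_{i,i} = 8 - 2·2^(3-α)`. The
stability condition gives `σ_{i,k} (8 - 2·2^(3-α)) ≤ 1 - l_1`, so the explicit step is a
max-norm contraction and `E_k = max_i |ε^k_i|` satisfies
`E_{k+1} ≤ (1 - l_1) E_k + Σ_{s=1}^{k-1} (l_s - l_{s+1}) E_{k-s} + R_max`.
As the `l_s` decrease from `l_0 = 1`, induction gives `E_k ≤ R_max / l_{k-1}`, and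
`l_{k-1} ≥ (1 - γ) k^(-γ)` gives the rate.

All the sign information on differences of powers comes from one fact: on `[0, ∞)` the forward
difference `Δⁿ x^p` has the weak sign of `p (p-1) ⋯ (p-n+1)`, by induction on `n` from
`Δ x^p = p ∫ s^(p-1)`.
-/

open Finset intervalIntegral MeasureTheory Polynomial fwdDiff

def SignControls (a b : ℝ) : Prop := (0 ≤ a → 0 ≤ b) ∧ (a ≤ 0 → b ≤ 0)

lemma SignControls.mul_left {a b : ℝ} (h : SignControls a b) (r : ℝ) :
    SignControls (r * a) (r * b) := by
  rcases lt_trichotomy r 0 with hr | rfl | hr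
  · exact ⟨fun h' => mul_nonneg_of_nonpos_of_nonpos hr.le (h.2 (nonpos_of_mul_nonneg_right h' hr)),
      fun h' => mul_nonpos_of_nonpos_of_nonneg hr.le (h.1 (nonneg_of_mul_nonpos_right h' hr))⟩
  · simp [SignControls]
  · exact ⟨fun h' => mul_nonneg hr.le (h.1 (nonneg_of_mul_nonneg_right h' hr)),
      fun h' => mul_nonpos_of_nonneg_of_nonpos hr.le (h.2 (nonpos_of_mul_nonpos_right h' hr))⟩

lemma SignControls.integral {a x y : ℝ} {g : ℝ → ℝ} (hxy : x ≤ y)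
    (hg : IntervalIntegrable g volume x y) (h : ∀ s ∈ Set.Ioo x y, SignControls a (g s)) :
    SignControls a (∫ s in x..y, g s) := by
  constructor
  · intro ha
    simpa using integral_mono_on_of_le_Ioo hxy intervalIntegrable_const hg
      (fun s hs => (h s hs).1 ha)
  · intro ha
    simpa using integral_mono_on_of_le_Ioo hxy hg intervalIntegrable_const
      (fun s hs => (h s hs).2 ha)

lemma IntervalIntegrable.comp_add_nat {g : ℝ → ℝ} {x : ℝ} {k : ℕ}
    (hg : IntervalIntegrable g volume (x + k) (x + k + 1)) :
    IntervalIntegrable (fun s => g (s + k • (1 : ℝ))) volume x (x + 1) := by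
  rw [IntervalIntegrable.comp_add_right_iff (by simp)]
  simpa [add_right_comm] using hg

lemma IntervalIntegrable.fwdDiff_iter {g : ℝ → ℝ} {x : ℝ} {n : ℕ}
    (hg : ∀ k ≤ n, IntervalIntegrable g volume (x + k) (x + k + 1)) :
    IntervalIntegrable ((Δ_[1])^[n] g) volume x (x + 1) := by
  rw [show (Δ_[1])^[n] g = _ from funext (fwdDiff_iter_eq_sum_shift 1 g n)]
  simp only [zsmul_eq_mul]
  simpa only [Finset.sum_fn] using IntervalIntegrable.sum _ fun k hk =>
    (hg k (Nat.lt_succ_iff.mp (mem_range.mp hk))).comp_add_nat.const_mul _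

theorem fwdDiff_iter_eq_integral {F g : ℝ → ℝ} {x : ℝ} {n : ℕ}
    (hg : ∀ k ≤ n, IntervalIntegrable g volume (x + k) (x + k + 1))
    (hF : ∀ k ≤ n, F (x + k) = ∫ s in (x + k)..(x + k + 1), g s) :
    (Δ_[1])^[n] F x = ∫ s in x..x + 1, (Δ_[1])^[n] g s := by
  simp_rw [fwdDiff_iter_eq_sum_shift, zsmul_eq_mul]
  rw [intervalIntegral.integral_finsetSum]
  · refine sum_congr rfl fun k hk => ?_
    rw [intervalIntegral.integral_const_mul, nsmul_one, hF k (Nat.lt_succ_iff.mp (mem_range.mp hk)),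
      intervalIntegral.integral_comp_add_right, add_right_comm]
  · exact fun k hk => (hg k (Nat.lt_succ_iff.mp (mem_range.mp hk))).comp_add_nat.const_mul _

lemma fwdDiff_rpow_eq_integral {p y : ℝ} (hpy : 0 < p ∨ 0 < y) :
    Δ_[1] (fun x => x ^ p) y = p * ∫ s in y..y + 1, s ^ (p - 1) := by
  rcases eq_or_ne p 0 with rfl | hp
  · simp [fwdDiff]
  have hint : -1 < p - 1 ∨ p - 1 ≠ -1 ∧ (0:ℝ) ∉ Set.uIcc y (y + 1) := by
    rcases hpy with hp' | hy'
    · exact Or.inl (by linarith)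
    · exact Or.inr ⟨by contrapose! hp; linarith, by
        rw [Set.uIcc_of_le (by linarith)]; exact fun h => (lt_irrefl 0) (hy'.trans_le h.1)⟩
  rw [integral_rpow hint, sub_add_cancel, fwdDiff]
  field_simp

lemma intervalIntegrable_rpow_sub_one {p x : ℝ} (hpx : 0 < p ∨ 0 < x) :
    IntervalIntegrable (fun s => s ^ (p - 1)) volume x (x + 1) := by
  rcases hpx with hp | hx'
  · exact intervalIntegrable_rpow' (by linarith)
  · refine intervalIntegrable_rpow (Or.inr ?_)
    rw [Set.uIcc_of_le (by linarith)]; exact fun h => (lt_irrefl 0) (hx'.trans_le h.1)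

theorem signControls_fwdDiff_iter_rpow (n : ℕ) :
    ∀ {p x : ℝ}, 0 ≤ x → (0 < p ∨ 0 < x) →
      SignControls ((descPochhammer ℝ n).eval p) ((Δ_[1])^[n] (fun y => y ^ p) x) := by
  induction n with
  | zero => exact fun hx _ => ⟨fun _ => Real.rpow_nonneg hx _, fun h => absurd h (by simp)⟩
  | succ n ih =>
    intro p x hx hpx
    have hshift (k : ℕ) : 0 < p ∨ 0 < x + k := hpx.imp_right fun h => by positivity
    have hint (k : ℕ) : IntervalIntegrable (fun s => s ^ (p - 1)) volume (x + k) (x + k + 1) :=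
      intervalIntegrable_rpow_sub_one (hshift k)
    rw [Function.iterate_succ_apply, fwdDiff_iter_eq_integral (g := p • fun s => s ^ (p - 1))
        (fun k _ => (hint k).const_mul p) (fun k _ => by
          rw [fwdDiff_rpow_eq_integral (hshift k), ← intervalIntegral.integral_const_mul]; rfl),
      fwdDiff_iter_const_smul]
    simp only [Pi.smul_apply, smul_eq_mul, intervalIntegral.integral_const_mul,
      descPochhammer_succ_left, eval_mul, eval_X, eval_comp, eval_sub, eval_one]
    refine (SignControls.integral (by linarith) (IntervalIntegrable.fwdDiff_iter fun k _ => hint k)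
      fun s hs => ih (by linarith [hs.1]) (Or.inr (by linarith [hs.1]))).mul_left p

lemma fwdDiff_iter_two_apply (f : ℝ → ℝ) (x : ℝ) :
    (Δ_[1])^[2] f x = f (x + 2) - 2 * f (x + 1) + f x := by
  simp [fwdDiff_iter_eq_sum_shift, sum_range_succ]
  ring_nf

lemma fwdDiff_iter_three_apply (f : ℝ → ℝ) (x : ℝ) :
    (Δ_[1])^[3] f x = f (x + 3) - 3 * f (x + 2) + 3 * f (x + 1) - f x := by
  simp [fwdDiff_iter_eq_sum_shift, sum_range_succ]
  ring_nf

lemma fwdDiff_iter_four_apply (f : ℝ → ℝ) (x : ℝ) :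
    (Δ_[1])^[4] f x = f (x + 4) - 4 * f (x + 3) + 6 * f (x + 2) - 4 * f (x + 1) + f x := by
  simp [fwdDiff_iter_eq_sum_shift, sum_range_succ, Nat.choose]
  ring_nf

section lCoef

variable {γ : ℝ}

lemma lCoef_eq_fwdDiff (s : ℕ) : lCoef γ s = Δ_[1] (fun x => x ^ (1 - γ)) (s : ℝ) := rfl

lemma lCoef_zero (hγ : γ < 1) : lCoef γ 0 = 1 := by
  simp [lCoef, Real.zero_rpow (by linarith : 1 - γ ≠ 0)]

lemma lCoef_pos (hγ : γ < 1) (s : ℕ) : 0 < lCoef γ s :=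
  sub_pos.2 (Real.rpow_lt_rpow (Nat.cast_nonneg s) (lt_add_one _) (by linarith))

lemma lCoef_succ_le (hγ : γ ∈ Set.Ico 0 1) (s : ℕ) : lCoef γ (s + 1) ≤ lCoef γ s := by
  have h := (signControls_fwdDiff_iter_rpow 2 (Nat.cast_nonneg s)
    (Or.inl (by linarith [hγ.2]) : 0 < 1 - γ ∨ _)).2 (by
      simp [descPochhammer_succ_right]; nlinarith [hγ.1, hγ.2])
  rw [fwdDiff_iter_two_apply] at h
  simp only [lCoef]
  push_cast
  rw [add_assoc, one_add_one_eq_two]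
  linarith

lemma lCoef_antitone (hγ : γ ∈ Set.Ico 0 1) : Antitone (lCoef γ) :=
  antitone_nat_of_succ_le (lCoef_succ_le hγ)

lemma mul_rpow_neg_le_lCoef (hγ : γ ∈ Set.Ico 0 1) {k : ℕ} (hk : 1 ≤ k) :
    (1 - γ) * (k : ℝ) ^ (-γ) ≤ lCoef γ (k - 1) := by
  have hk' : ((k - 1 : ℕ) : ℝ) + 1 = k := by rw [Nat.cast_sub hk]; ring
  have hk0 : (0 : ℝ) ≤ ((k - 1 : ℕ) : ℝ) := Nat.cast_nonneg _
  rw [lCoef_eq_fwdDiff, fwdDiff_rpow_eq_integral (Or.inl (by linarith [hγ.2])), sub_sub_cancel_left]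
  refine mul_le_mul_of_nonneg_left ?_ (by linarith [hγ.2])
  have hmono := integral_mono_on_of_le_Ioo (μ := volume) (by linarith) intervalIntegrable_const
    (intervalIntegrable_rpow' (by linarith [hγ.2]) : IntervalIntegrable (fun s : ℝ => s ^ (-γ)) _
      ((k - 1 : ℕ) : ℝ) (((k - 1 : ℕ) : ℝ) + 1))
    fun s hs => Real.rpow_le_rpow_of_nonpos (by linarith [hs.1])
      (hk' ▸ hs.2.le) (by linarith [hγ.1])
  rwa [intervalIntegral.integral_const, add_sub_cancel_left, one_smul] at hmono

end lCoef

lemma four_mul_two_rpow_le {p : ℝ} (hp : p ≤ 2) : 4 * (2 : ℝ) ^ p ≤ 7 + 3 ^ p := by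
  -- Bernoulli for `u ↦ u ^ log₂ 3` at `u = 2 ^ p / 4`, using `log₂ 3 ≤ 16 / 9`
  have h2θ : (2 : ℝ) ^ Real.logb 2 3 = 3 := Real.rpow_logb (by norm_num) (by norm_num) (by norm_num)
  have hθ1 : 1 ≤ Real.logb 2 3 := by
    rw [Real.le_logb_iff_rpow_le (by norm_num) (by norm_num)]; norm_num
  have hθ16 : 9 * Real.logb 2 3 ≤ 16 := by
    have := Real.logb_le_logb_of_le (b := 2) (by norm_num) (by norm_num)
      (by norm_num : (3 : ℝ) ^ 9 ≤ 2 ^ 16)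
    rwa [Real.logb_pow, Real.logb_pow, Real.logb_self_eq_one (by norm_num), mul_one,
      Nat.cast_ofNat, Nat.cast_ofNat] at this
  generalize Real.logb 2 3 = θ at h2θ hθ1 hθ16
  set u := (2 : ℝ) ^ p / 4
  have hu1 : u ≤ 1 := by
    have : (2 : ℝ) ^ p ≤ 2 ^ (2 : ℝ) := Real.rpow_le_rpow_of_exponent_le (by norm_num) hp
    norm_num at this; simp only [u]; linarith
  have hu0 : 0 ≤ u := by positivity
  have hbern : 1 + θ * (u - 1) ≤ u ^ θ := by
    simpa using one_add_mul_self_le_rpow_one_add (s := u - 1) (by linarith) hθ1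
  have hpow : u ^ θ = 3 ^ p / 9 := by
    rw [Real.div_rpow (by positivity) (by norm_num), ← Real.rpow_mul (by norm_num), mul_comm,
      Real.rpow_mul (by norm_num), h2θ, show (4 : ℝ) = 2 ^ (2 : ℝ) by norm_num,
      ← Real.rpow_mul (by norm_num), mul_comm, Real.rpow_mul (by norm_num), h2θ]
    norm_num
  have h2p : (2 : ℝ) ^ p = 4 * u := by simp only [u]; ring
  rw [h2p]
  nlinarith [mul_nonneg (sub_nonneg.2 hu1) (by linarith : (0 : ℝ) ≤ 16 - 9 * θ)]

-- `t = 1` is special: `g_{i,i±1}` is the fourth difference of `|x| ^ p` at `-1`, where the real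
-- power `(-1) ^ p` is not `1`.
noncomputable def rieszWeight (p : ℝ) (t : ℕ) : ℝ :=
  if t = 1 then 7 + 3 ^ p - 4 * 2 ^ p else (Δ_[1])^[4] (fun x => x ^ p) ((t : ℝ) - 2)

section rieszWeight

variable {p : ℝ}

lemma rieszWeight_nonneg (hp : p ∈ Set.Icc 1 2) {t : ℕ} (ht : 1 ≤ t) : 0 ≤ rieszWeight p t := by
  rw [rieszWeight]
  split_ifs with h1
  · linarith [four_mul_two_rpow_le hp.2]
  · refine (signControls_fwdDiff_iter_rpow 4 ?_ (Or.inl (by linarith [hp.1]))).1 ?_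
    · have : (2 : ℝ) ≤ t := by exact_mod_cast (by omega : 2 ≤ t)
      linarith
    · simp [descPochhammer_succ_right]
      nlinarith [mul_nonneg (by linarith [hp.1] : 0 ≤ p) (by linarith [hp.1] : 0 ≤ p - 1),
        mul_nonneg (by linarith [hp.2] : 0 ≤ 2 - p) (by linarith [hp.2] : 0 ≤ 3 - p)]

lemma sum_rieszWeight (hp : p ≠ 0) {M : ℕ} (hM : 1 ≤ M) :
    ∑ t ∈ Icc 1 M, rieszWeight p t = 4 - 2 ^ p + (Δ_[1])^[3] (fun x => x ^ p) ((M : ℝ) - 1) := by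
  induction M, hM using Nat.le_induction with
  | base =>
    simp [rieszWeight, fwdDiff_iter_three_apply, Real.zero_rpow hp]
    ring
  | succ M hM ih =>
    have hstep : (Δ_[1])^[4] (fun x : ℝ => x ^ p) ((M : ℝ) - 1) =
        (Δ_[1])^[3] (fun x : ℝ => x ^ p) M - (Δ_[1])^[3] (fun x : ℝ => x ^ p) ((M : ℝ) - 1) := by
      rw [Function.iterate_succ_apply', fwdDiff, sub_add_cancel]
    rw [sum_Icc_succ_top (by omega), ih, rieszWeight, if_neg (by omega), Nat.cast_succ,
      show (M : ℝ) + 1 - 2 = M - 1 by ring, hstep, add_sub_cancel_right]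
    ring

lemma sum_rieszWeight_le (hp : p ∈ Set.Icc 1 2) (M : ℕ) :
    ∑ t ∈ Icc 1 M, rieszWeight p t ≤ 4 - 2 ^ p := by
  rcases Nat.eq_zero_or_pos M with rfl | hM
  · have : (2 : ℝ) ^ p ≤ 2 ^ (2 : ℝ) := Real.rpow_le_rpow_of_exponent_le (by norm_num) hp.2
    norm_num at this ⊢; linarith
  rw [sum_rieszWeight (by linarith [hp.1]) hM]
  have hM' : (1 : ℝ) ≤ M := by exact_mod_cast hM
  have := (signControls_fwdDiff_iter_rpow 3 (p := p) (by linarith : (0 : ℝ) ≤ M - 1)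
    (Or.inl (by linarith [hp.1]))).2 (by
      simp [descPochhammer_succ_right]
      nlinarith [mul_nonneg (by linarith [hp.1] : 0 ≤ p) (by linarith [hp.1] : 0 ≤ p - 1),
        hp.2])
  linarith

end rieszWeight

section gCoef

variable {α : ℝ} {N i m : ℕ}

lemma gCoef_self (hα : α ≠ 3) (hi : 1 ≤ i) (hiN : i < N) :
    gCoef α N i i = -(8 - 2 * 2 ^ (3 - α)) := by
  have hp : 3 - α ≠ 0 := sub_ne_zero.2 hα.symm
  simp (disch := omega) only [gCoef, pCoef, qCoef, aCoef, bCoef, if_pos, if_neg]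
  push_cast [Nat.cast_sub hi]
  ring_nf
  norm_num [Real.zero_rpow hp]
  ring

lemma gCoef_of_lt (hα : α ≠ 3) (hm : 1 ≤ m) (hmi : m < i) :
    gCoef α N i m = rieszWeight (3 - α) (i - m) := by
  have hp : 3 - α ≠ 0 := sub_ne_zero.2 hα.symm
  obtain rfl | hmi' := eq_or_lt_of_le (Nat.succ_le_of_lt hmi)
  · simp (disch := omega) only [gCoef, pCoef, qCoef, aCoef, bCoef, rieszWeight, if_pos, if_neg]
    push_cast [Nat.cast_sub hm]
    ring_nf
    norm_num [Real.zero_rpow hp]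
    ring
  · simp (disch := omega) only [gCoef, pCoef, qCoef, aCoef, rieszWeight, if_pos, if_neg]
    rw [fwdDiff_iter_four_apply]
    push_cast [Nat.cast_sub hmi.le, Nat.cast_sub (hm.trans hmi.le)]
    ring_nf

lemma gCoef_of_gt (hα : α ≠ 3) (hi : 1 ≤ i) (him : i < m) (hmN : m < N) :
    gCoef α N i m = rieszWeight (3 - α) (m - i) := by
  have hp : 3 - α ≠ 0 := sub_ne_zero.2 hα.symm
  obtain rfl | him' := eq_or_lt_of_le (Nat.succ_le_of_lt him)
  · simp (disch := omega) only [gCoef, pCoef, qCoef, aCoef, bCoef, rieszWeight, if_pos, if_neg]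
    push_cast [Nat.cast_sub hi]
    ring_nf
    norm_num [Real.zero_rpow hp]
    ring
  · simp (disch := omega) only [gCoef, pCoef, qCoef, bCoef, rieszWeight, if_pos, if_neg]
    rw [fwdDiff_iter_four_apply]
    push_cast [Nat.cast_sub him.le, Nat.cast_sub hi]
    ring_nf

variable (hα : α ∈ Set.Ioc 1 2) (hi : 1 ≤ i)
include hα hi

lemma gCoef_nonneg (hm : m ∈ (Icc 1 (N - 1)).erase i) : 0 ≤ gCoef α N i m := by
  have hp : 3 - α ∈ Set.Icc 1 2 := ⟨by linarith [hα.2], by linarith [hα.1]⟩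
  obtain ⟨hmi, hm⟩ := mem_erase.1 hm
  obtain ⟨hm1, hmN⟩ := mem_Icc.1 hm
  rcases lt_or_gt_of_ne hmi with h | h
  · rw [gCoef_of_lt (by linarith [hα.2]) hm1 h]; exact rieszWeight_nonneg hp (by omega)
  · rw [gCoef_of_gt (by linarith [hα.2]) hi h (by omega)]; exact rieszWeight_nonneg hp (by omega)

lemma sum_gCoef_le (hiN : i < N) :
    ∑ m ∈ (Icc 1 (N - 1)).erase i, gCoef α N i m ≤ 8 - 2 * 2 ^ (3 - α) := by
  have hp : 3 - α ∈ Set.Icc 1 2 := ⟨by linarith [hα.2], by linarith [hα.1]⟩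
  have hsplit : (Icc 1 (N - 1)).erase i = Icc 1 (i - 1) ∪ Icc (i + 1) (N - 1) := by
    ext x; simp only [mem_erase, mem_Icc, mem_union]; omega
  have hdisj : Disjoint (Icc 1 (i - 1)) (Icc (i + 1) (N - 1)) :=
    disjoint_left.2 fun x hx hx' => by simp only [mem_Icc] at hx hx'; omega
  have hleft : ∑ m ∈ Icc 1 (i - 1), gCoef α N i m = ∑ t ∈ Icc 1 (i - 1), rieszWeight (3 - α) t :=
    sum_nbij' (fun m => i - m) (fun t => i - t) (by intro a ha; simp only [mem_Icc] at ha ⊢; omega)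
      (by intro a ha; simp only [mem_Icc] at ha ⊢; omega)
      (by intro a ha; simp only [mem_Icc] at ha; omega)
      (by intro a ha; simp only [mem_Icc] at ha; omega)
      fun a ha => by
        simp only [mem_Icc] at ha; exact gCoef_of_lt (by linarith [hα.2]) ha.1 (by omega)
  have hright : ∑ m ∈ Icc (i + 1) (N - 1), gCoef α N i m =
      ∑ t ∈ Icc 1 (N - 1 - i), rieszWeight (3 - α) t :=
    sum_nbij' (fun m => m - i) (fun t => t + i) (by intro a ha; simp only [mem_Icc] at ha ⊢; omega)
      (by intro a ha; simp only [mem_Icc] at ha ⊢; omega)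
      (by intro a ha; simp only [mem_Icc] at ha; omega)
      (by intro a ha; simp only [mem_Icc] at ha; omega)
      fun a ha => by
        simp only [mem_Icc] at ha; exact gCoef_of_gt (by linarith [hα.2]) hi (by omega) (by omega)
  rw [hsplit, sum_union hdisj, hleft, hright]
  linarith [sum_rieszWeight_le hp (i - 1), sum_rieszWeight_le hp (N - 1 - i)]

end gCoef

lemma kappa_neg {α : ℝ} (h1 : 1 < α) (h3 : α < 3) : kappa α < 0 := by
  have hcos : Real.cos (α * Real.pi / 2) < 0 :=
    Real.cos_neg_of_pi_div_two_lt_of_lt (by nlinarith [Real.pi_pos]) (by nlinarith [Real.pi_pos])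
  exact one_div_neg.2 (by linarith)

lemma sigma_bounds_of_stability {γ α τ Δx c Cmax σ : ℝ} (hγ : γ < 2) (hα : α ∈ Set.Ioo 1 3)
    (hτ : 0 ≤ τ) (hΔx : 0 < Δx) (hc : 0 ≤ c ∧ c ≤ Cmax)
    (hstab : 4 * (-kappa α) * Cmax * Real.Gamma (2 - γ) * (1 - (2:ℝ) ^ (1 - α)) * τ ^ γ
      ≤ Real.Gamma (4 - α) * (1 - (2:ℝ) ^ (-γ)) * Δx ^ α)
    (hσ : σ = -(Real.Gamma (2 - γ) * τ ^ γ * kappa α * c) / (Real.Gamma (4 - α) * Δx ^ α)) :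
    0 ≤ σ ∧ σ * (8 - 2 * 2 ^ (3 - α)) ≤ 1 - lCoef γ 1 := by
  have hκ := kappa_neg hα.1 hα.2
  have hden : 0 < Real.Gamma (4 - α) * Δx ^ α :=
    mul_pos (Real.Gamma_pos_of_pos (by linarith [hα.2])) (by positivity)
  have hG : 0 < Real.Gamma (2 - γ) := Real.Gamma_pos_of_pos (by linarith)
  have hτγ : 0 ≤ τ ^ γ := by positivity
  have h2α : (2 : ℝ) ^ (1 - α) ≤ 1 :=
    Real.rpow_le_one_of_one_le_of_nonpos (by norm_num) (by linarith [hα.1])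
  have hP : 8 - 2 * (2 : ℝ) ^ (3 - α) = 8 * (1 - 2 ^ (1 - α)) := by
    rw [show 3 - α = 2 + (1 - α) by ring, Real.rpow_add two_pos]; norm_num; ring
  have hl1 : 1 - lCoef γ 1 = 2 * (1 - 2 ^ (-γ)) := by
    rw [lCoef, show (1 - γ) = 1 + -γ by ring, Nat.cast_one, one_add_one_eq_two,
      Real.rpow_add two_pos, Real.one_rpow]; norm_num; ring
  have hnum : 0 ≤ Real.Gamma (2 - γ) * τ ^ γ * (-kappa α) :=
    mul_nonneg (mul_nonneg hG.le hτγ) (by linarith)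
  rw [hσ, hP, hl1, show -(Real.Gamma (2 - γ) * τ ^ γ * kappa α * c)
    = Real.Gamma (2 - γ) * τ ^ γ * (-kappa α) * c by ring]
  refine ⟨div_nonneg (mul_nonneg hnum hc.1) hden.le, ?_⟩
  rw [div_mul_eq_mul_div, div_le_iff₀ hden]
  nlinarith [mul_le_mul_of_nonneg_left hc.2 (mul_nonneg hnum (sub_nonneg.2 h2α))]

section maxAbs

variable {N : ℕ} {v : ℕ → ℝ} {b : ℝ}

lemma abs_le_maxAbs {i : ℕ} (hi : i ≤ N) : |v i| ≤ maxAbs N v :=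
  le_sup' (fun j => |v j|) (mem_range.2 (Nat.lt_succ_of_le hi))

lemma maxAbs_le_iff : maxAbs N v ≤ b ↔ ∀ i ≤ N, |v i| ≤ b := by
  simp [maxAbs]

lemma maxAbs_nonneg : 0 ≤ maxAbs N v := (abs_nonneg _).trans (abs_le_maxAbs (Nat.zero_le N))

end maxAbs

lemma abs_explicit_row_le {N i : ℕ} {a σ P : ℝ} {g v : ℕ → ℝ} (hi : i ≤ N) (hv0 : v 0 = 0)
    (hvN : v N = 0) (hσ : 0 ≤ σ) (hσP : σ * P ≤ a) (hg : ∀ m ∈ (Icc 1 (N - 1)).erase i, 0 ≤ g m)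
    (hgP : ∑ m ∈ (Icc 1 (N - 1)).erase i, g m ≤ P) :
    |(a - σ * P) * v i + σ * ∑ m ∈ (range (N + 1)).erase i, g m * v m| ≤ a * maxAbs N v := by
  have hinterior : ∑ m ∈ (range (N + 1)).erase i, g m * v m
      = ∑ m ∈ (Icc 1 (N - 1)).erase i, g m * v m := by
    refine (sum_subset (fun m hm => ?_) fun m hm hm' => ?_).symm
    · simp only [mem_erase, mem_Icc, mem_range] at hm ⊢; omega
    · simp only [mem_erase, mem_Icc, mem_range] at hm hm'
      obtain rfl | rfl : m = 0 ∨ m = N := by omega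
      · rw [hv0, mul_zero]
      · rw [hvN, mul_zero]
  have hoff : |∑ m ∈ (Icc 1 (N - 1)).erase i, g m * v m| ≤ P * maxAbs N v :=
    calc |∑ m ∈ (Icc 1 (N - 1)).erase i, g m * v m|
        ≤ ∑ m ∈ (Icc 1 (N - 1)).erase i, g m * maxAbs N v := by
          refine (abs_sum_le_sum_abs _ _).trans (sum_le_sum fun m hm => ?_)
          rw [abs_mul, abs_of_nonneg (hg m hm)]
          exact mul_le_mul_of_nonneg_left (abs_le_maxAbs (by simp at hm; omega)) (hg m hm)
      _ ≤ P * maxAbs N v := by rw [← sum_mul]; exact mul_le_mul_of_nonneg_right hgP maxAbs_nonneg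
  have hdiag : 0 ≤ a - σ * P := by linarith
  rw [hinterior]
  calc _ ≤ (a - σ * P) * |v i| + σ * |∑ m ∈ (Icc 1 (N - 1)).erase i, g m * v m| := by
        refine (abs_add_le _ _).trans_eq ?_
        rw [abs_mul, abs_mul, abs_of_nonneg (by linarith), abs_of_nonneg hσ]
    _ ≤ (a - σ * P) * maxAbs N v + σ * (P * maxAbs N v) := by
        gcongr
        exact abs_le_maxAbs hi
    _ = a * maxAbs N v := by ring

lemma maxAbs_succ_le {γ α Rmax : ℝ} {N k : ℕ} {σ r : ℕ → ℝ} {ε : ℕ → ℕ → ℝ}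
    (hγ : γ ∈ Set.Ico 0 1) (hα : α ∈ Set.Ioc 1 2) (hR : 0 ≤ Rmax)
    (hσ : ∀ i, 1 ≤ i → i ≤ N - 1 → 0 ≤ σ i ∧ σ i * (8 - 2 * 2 ^ (3 - α)) ≤ 1 - lCoef γ 1)
    (hr : ∀ i, 1 ≤ i → i ≤ N - 1 → |r i| ≤ Rmax)
    (hbc : ε k 0 = 0 ∧ ε k N = 0) (hbc_succ : ε (k + 1) 0 = 0 ∧ ε (k + 1) N = 0)
    (hscheme : ∀ i, 1 ≤ i → i ≤ N - 1 →
      ε (k + 1) i = (1 - lCoef γ 1 + σ i * gCoef α N i i) * ε k i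
        + (∑ s ∈ Icc 1 (k - 1), (lCoef γ s - lCoef γ (s + 1)) * ε (k - s) i)
        + σ i * (∑ m ∈ (range (N + 1)).erase i, gCoef α N i m * ε k m) + r i) :
    maxAbs N (ε (k + 1)) ≤ (1 - lCoef γ 1) * maxAbs N (ε k)
      + ∑ s ∈ Icc 1 (k - 1), (lCoef γ s - lCoef γ (s + 1)) * maxAbs N (ε (k - s)) + Rmax := by
  have hl (s : ℕ) : 0 ≤ lCoef γ s - lCoef γ (s + 1) := sub_nonneg.2 (lCoef_succ_le hγ s)
  have hl1 : 0 ≤ 1 - lCoef γ 1 := lCoef_zero hγ.2 ▸ hl 0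
  have hrhs : 0 ≤ (1 - lCoef γ 1) * maxAbs N (ε k)
      + ∑ s ∈ Icc 1 (k - 1), (lCoef γ s - lCoef γ (s + 1)) * maxAbs N (ε (k - s)) + Rmax :=
    add_nonneg (add_nonneg (mul_nonneg hl1 maxAbs_nonneg)
      (sum_nonneg fun s _ => mul_nonneg (hl s) maxAbs_nonneg)) hR
  refine maxAbs_le_iff.2 fun i hi => ?_
  obtain rfl | rfl | ⟨hi1, hiN⟩ : i = 0 ∨ i = N ∨ (1 ≤ i ∧ i ≤ N - 1) := by omega
  · rwa [hbc_succ.1, abs_zero]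
  · rwa [hbc_succ.2, abs_zero]
  obtain ⟨hσ0, hσP⟩ := hσ i hi1 hiN
  have hrow := abs_explicit_row_le hi hbc.1 hbc.2 hσ0 hσP
    (fun m hm => gCoef_nonneg hα hi1 hm) (sum_gCoef_le hα hi1 (by omega))
  have hhist : |∑ s ∈ Icc 1 (k - 1), (lCoef γ s - lCoef γ (s + 1)) * ε (k - s) i|
      ≤ ∑ s ∈ Icc 1 (k - 1), (lCoef γ s - lCoef γ (s + 1)) * maxAbs N (ε (k - s)) := by
    refine (abs_sum_le_sum_abs _ _).trans (sum_le_sum fun s _ => ?_)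
    rw [abs_mul, abs_of_nonneg (hl s)]
    exact mul_le_mul_of_nonneg_left (abs_le_maxAbs hi) (hl s)
  rw [hscheme i hi1 hiN, gCoef_self (by linarith [hα.2]) hi1 (by omega),
    show ∀ A H B : ℝ, A * ε k i + H + σ i * B + r i = (A * ε k i + σ i * B) + H + r i by
      intros; ring,
    show 1 - lCoef γ 1 + σ i * -(8 - 2 * 2 ^ (3 - α))
      = 1 - lCoef γ 1 - σ i * (8 - 2 * 2 ^ (3 - α)) by ring]
  linarith [abs_add_three ((1 - lCoef γ 1 - σ i * (8 - 2 * 2 ^ (3 - α))) * ε k i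
      + σ i * ∑ m ∈ (range (N + 1)).erase i, gCoef α N i m * ε k m)
    (∑ s ∈ Icc 1 (k - 1), (lCoef γ s - lCoef γ (s + 1)) * ε (k - s) i) (r i), hr i hi1 hiN]

lemma le_div_of_L1_recursion {l E : ℕ → ℝ} {Rmax : ℝ} {K : ℕ} (hl_pos : ∀ s, 0 < l s)
    (hl_anti : Antitone l) (hl0 : l 0 = 1) (hR : 0 ≤ Rmax) (h1 : E 1 ≤ Rmax)
    (hrec : ∀ k, 1 ≤ k → k + 1 ≤ K →
      E (k + 1) ≤ (1 - l 1) * E k + ∑ s ∈ Icc 1 (k - 1), (l s - l (s + 1)) * E (k - s) + Rmax) :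
    ∀ k, 1 ≤ k → k ≤ K → E k ≤ Rmax / l (k - 1) := by
  intro k
  induction k using Nat.strong_induction_on with
  | _ k ih =>
  intro hk hkK
  obtain rfl | ⟨j, rfl, hj⟩ : k = 1 ∨ ∃ j, k = j + 1 ∧ 1 ≤ j := by
    rcases Nat.lt_or_ge k 2 with h | h
    · left; omega
    · right; exact ⟨k - 1, by omega, by omega⟩
  · simpa [hl0] using h1
  have hprev : ∀ i, 1 ≤ i → i ≤ j → E i ≤ Rmax / l (j - 1) := fun i hi hij =>
    (ih i (by omega) hi (by omega)).trans
      (div_le_div_of_nonneg_left hR (hl_pos _) (hl_anti (by omega)))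
  have htel : ∑ s ∈ Icc 1 (j - 1), (l s - l (s + 1)) = l 1 - l j := by
    rw [show Icc 1 (j - 1) = Ico 1 j by ext; simp; omega, ← neg_sub, ← sum_Ico_sub l hj,
      ← sum_neg_distrib]
    simp only [neg_sub]
  have hl1 : 0 ≤ 1 - l 1 := by linarith [hl_anti (Nat.zero_le 1)]
  calc E (j + 1)
      ≤ (1 - l 1) * E j + ∑ s ∈ Icc 1 (j - 1), (l s - l (s + 1)) * E (j - s) + Rmax :=
        hrec j hj hkK
    _ ≤ (1 - l 1) * (Rmax / l (j - 1))
          + ∑ s ∈ Icc 1 (j - 1), (l s - l (s + 1)) * (Rmax / l (j - 1)) + Rmax := by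
        gcongr with s hs
        · exact hprev j hj le_rfl
        · exact sub_nonneg.2 (hl_anti (Nat.le_succ s))
        · simp only [mem_Icc] at hs; exact hprev _ (by omega) (by omega)
    _ = (1 - l j) * (Rmax / l (j - 1)) + Rmax := by rw [← sum_mul, htel]; ring
    _ ≤ (1 - l j) * (Rmax / l j) + Rmax := by
        gcongr
        · linarith [hl_anti (Nat.zero_le j)]
        · exact hl_pos j
        · exact hl_anti (Nat.sub_le j 1)
    _ = Rmax / l (j + 1 - 1) := by rw [Nat.add_sub_cancel]; field_simp [(hl_pos j).ne']; ring

lemma div_lCoef_pred_le {γ Rmax : ℝ} (hγ : γ ∈ Set.Ico 0 1) (hR : 0 ≤ Rmax) {k : ℕ} (hk : 1 ≤ k) :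
    Rmax / lCoef γ (k - 1) ≤ (k : ℝ) ^ γ / (1 - γ) * Rmax := by
  have hk0 : (0 : ℝ) < k := by exact_mod_cast hk
  calc Rmax / lCoef γ (k - 1) ≤ Rmax / ((1 - γ) * (k : ℝ) ^ (-γ)) :=
        div_le_div_of_nonneg_left hR (mul_pos (by linarith [hγ.2]) (by positivity))
          (mul_rpow_neg_le_lCoef hγ hk)
    _ = (k : ℝ) ^ γ / (1 - γ) * Rmax := by
        rw [Real.rpow_neg hk0.le]; field_simp

lemma rpow_div_mul_le_of_mul_le {γ τ T C X : ℝ} {k : ℕ} (hγ : γ ∈ Set.Ico 0 1) (hτ : 0 ≤ τ)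
    (hkτ : k * τ ≤ T) (hC : 0 ≤ C) (hX : 0 ≤ X) :
    (k : ℝ) ^ γ / (1 - γ) * (C * τ ^ γ * X) ≤ C * T ^ γ / (1 - γ) * X := by
  have hγ1 : 0 < 1 - γ := by linarith [hγ.2]
  calc (k : ℝ) ^ γ / (1 - γ) * (C * τ ^ γ * X) = C * X / (1 - γ) * (k * τ) ^ γ := by
        rw [Real.mul_rpow (Nat.cast_nonneg k) hτ]; ring
    _ ≤ C * X / (1 - γ) * T ^ γ := by gcongr; exact hγ.1
    _ = C * T ^ γ / (1 - γ) * X := by ring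

theorem explicit_1d_convergence_general (γ α : ℝ) (hγ : γ ∈ Set.Ioo (0:ℝ) 1)
    (hα : α ∈ Set.Ioc (1:ℝ) 2)
    (N Nt : ℕ) (hNt : 1 ≤ Nt)
    (τ Δx : ℝ) (hτ : 0 < τ) (hΔx : 0 < Δx)
    (c : ℕ → ℕ → ℝ) (Cmax : ℝ)
    (hc : ∀ i k : ℕ, 1 ≤ i → i ≤ N - 1 → k ≤ Nt - 1 → 0 ≤ c i k ∧ c i k ≤ Cmax)
    (hstab : 4 * (-kappa α) * Cmax * Real.Gamma (2 - γ) * (1 - (2:ℝ) ^ (1 - α)) * τ ^ γ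
      ≤ Real.Gamma (4 - α) * (1 - (2:ℝ) ^ (-γ)) * Δx ^ α)
    (σ : ℕ → ℕ → ℝ)
    (hσ : ∀ i k : ℕ, 1 ≤ i → i ≤ N - 1 → k ≤ Nt - 1 →
      σ i k = -(Real.Gamma (2 - γ) * τ ^ γ * kappa α * c i k) / (Real.Gamma (4 - α) * Δx ^ α))
    (R : ℕ → ℕ → ℝ) (Rmax : ℝ)
    (hRmax : IsGreatest
      {x : ℝ | ∃ i k : ℕ, 1 ≤ i ∧ i ≤ N - 1 ∧ 1 ≤ k ∧ k ≤ Nt ∧ x = |R k i|} Rmax)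
    (ε : ℕ → ℕ → ℝ)
    (hinit : ∀ i : ℕ, i ≤ N → ε 0 i = 0)
    (hbc : ∀ k : ℕ, 1 ≤ k → k ≤ Nt → ε k 0 = 0 ∧ ε k N = 0)
    (hscheme0 : ∀ i : ℕ, 1 ≤ i → i ≤ N - 1 → ε 1 i = R 1 i)
    (hscheme : ∀ i k : ℕ, 1 ≤ i → i ≤ N - 1 → 1 ≤ k → k + 1 ≤ Nt →
      ε (k + 1) i = (1 - lCoef γ 1 + σ i k * gCoef α N i i) * ε k i
        + (∑ s ∈ Finset.Icc 1 (k - 1), (lCoef γ s - lCoef γ (s + 1)) * ε (k - s) i)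
        + σ i k * (∑ m ∈ (Finset.range (N + 1)).erase i, gCoef α N i m * ε k m)
        + R (k + 1) i) :
    (∀ k : ℕ, 1 ≤ k → k ≤ Nt →
      maxAbs N (ε k) ≤ Rmax / lCoef γ (k - 1) ∧
      Rmax / lCoef γ (k - 1) ≤ (k : ℝ) ^ γ / (1 - γ) * Rmax) ∧
    (∀ T C : ℝ, 0 < T → (Nt : ℝ) * τ ≤ T → 0 < C →
      (∀ i k : ℕ, 1 ≤ i → i ≤ N - 1 → 1 ≤ k → k ≤ Nt →
        |R k i| ≤ C * τ ^ γ * (τ ^ (2 - γ) + Δx ^ 2)) →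
      ∀ k : ℕ, k ≤ Nt →
        maxAbs N (ε k) ≤ C * T ^ γ / (1 - γ) * (τ ^ (2 - γ) + Δx ^ 2)) := by
  obtain ⟨hγ0, hγ1⟩ := hγ
  have hγ' : γ ∈ Set.Ico 0 1 := ⟨hγ0.le, hγ1⟩
  have hα' : α ∈ Set.Ioo 1 3 := ⟨hα.1, by linarith [hα.2]⟩
  obtain ⟨⟨i₀, k₀, hi₀, hiN₀, hk₀, hkN₀, hR₀⟩, hRle⟩ := hRmax
  have hR0 : 0 ≤ Rmax := hR₀ ▸ abs_nonneg _
  have hbound : ∀ k, 1 ≤ k → k ≤ Nt → maxAbs N (ε k) ≤ Rmax / lCoef γ (k - 1) := by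
    refine le_div_of_L1_recursion (lCoef_pos hγ1) (lCoef_antitone hγ') (lCoef_zero hγ1) hR0
      (maxAbs_le_iff.2 fun i hi => ?_) fun k hk hkN => maxAbs_succ_le hγ' hα hR0
        (fun i hi hiN => sigma_bounds_of_stability (by linarith) hα' hτ.le hΔx
          (hc i k hi hiN (by omega)) hstab (hσ i k hi hiN (by omega)))
        (fun i hi hiN => hRle ⟨i, k + 1, hi, hiN, by omega, hkN, rfl⟩) (hbc k hk (by omega))
        (hbc (k + 1) (by omega) hkN) fun i hi hiN => hscheme i k hi hiN hk hkN
    obtain rfl | rfl | ⟨hi1, hiN⟩ : i = 0 ∨ i = N ∨ (1 ≤ i ∧ i ≤ N - 1) := by omega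
    · simpa [(hbc 1 le_rfl hNt).1] using hR0
    · simpa [(hbc 1 le_rfl hNt).2] using hR0
    · exact hscheme0 i hi1 hiN ▸ hRle ⟨i, 1, hi1, hiN, le_rfl, hNt, rfl⟩
  refine ⟨fun k hk hkN => ⟨hbound k hk hkN, div_lCoef_pred_le hγ' hR0 hk⟩,
    fun T C _ hNtT hC hRC k hkN => ?_⟩
  have hrate : maxAbs N (ε k) ≤ (k : ℝ) ^ γ / (1 - γ) * Rmax := by
    obtain rfl | hk := Nat.eq_zero_or_pos k
    · simpa [maxAbs_le_iff, Real.zero_rpow hγ0.ne'] using hinit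
    · exact (hbound k hk hkN).trans (div_lCoef_pred_le hγ' hR0 hk)
  calc maxAbs N (ε k) ≤ (k : ℝ) ^ γ / (1 - γ) * Rmax := hrate
    _ ≤ (k : ℝ) ^ γ / (1 - γ) * (C * τ ^ γ * (τ ^ (2 - γ) + Δx ^ 2)) := by
        gcongr
        exact hR₀ ▸ hRC i₀ k₀ hi₀ hiN₀ hk₀ hkN₀
    _ ≤ C * T ^ γ / (1 - γ) * (τ ^ (2 - γ) + Δx ^ 2) :=
        rpow_div_mul_le_of_mul_le hγ' hτ.le
          ((mul_le_mul_of_nonneg_right (by exact_mod_cast hkN) hτ.le).trans hNtT) hC.le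
          (by positivity)

/-- Theorem 4.2 (case `0 < γ < 1`): conditional convergence of the one-dimensional
explicit scheme under the stability condition
`4(-κ_α) C_max Γ(2-γ)(1-2^(1-α)) τ^γ ≤ Γ(4-α)(1-2^(-γ)) Δx^α`. -/
theorem explicit_1d_convergence (γ α : ℝ) (hγ : γ ∈ Set.Ioo (0:ℝ) 1)
    (hα : α ∈ Set.Ioc (1:ℝ) 2)
    (N Nt : ℕ) (hN : 2 ≤ N) (hNt : 1 ≤ Nt)
    (τ Δx : ℝ) (hτ : 0 < τ) (hΔx : 0 < Δx)
    (c : ℕ → ℕ → ℝ) (Cmax : ℝ)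
    (hc : ∀ i k : ℕ, 1 ≤ i → i ≤ N - 1 → k ≤ Nt - 1 → 0 ≤ c i k ∧ c i k ≤ Cmax)
    (hstab : 4 * (-kappa α) * Cmax * Real.Gamma (2 - γ) * (1 - (2:ℝ) ^ (1 - α)) * τ ^ γ
      ≤ Real.Gamma (4 - α) * (1 - (2:ℝ) ^ (-γ)) * Δx ^ α)
    (σ : ℕ → ℕ → ℝ)
    (hσ : ∀ i k : ℕ, 1 ≤ i → i ≤ N - 1 → k ≤ Nt - 1 →
      σ i k = -(Real.Gamma (2 - γ) * τ ^ γ * kappa α * c i k) / (Real.Gamma (4 - α) * Δx ^ α))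
    (R : ℕ → ℕ → ℝ) (Rmax : ℝ)
    (hRmax : IsGreatest
      {x : ℝ | ∃ i k : ℕ, 1 ≤ i ∧ i ≤ N - 1 ∧ 1 ≤ k ∧ k ≤ Nt ∧ x = |R k i|} Rmax)
    (ε : ℕ → ℕ → ℝ)
    (hinit : ∀ i : ℕ, i ≤ N → ε 0 i = 0)
    (hbc : ∀ k : ℕ, 1 ≤ k → k ≤ Nt → ε k 0 = 0 ∧ ε k N = 0)
    (hscheme0 : ∀ i : ℕ, 1 ≤ i → i ≤ N - 1 → ε 1 i = R 1 i)
    (hscheme : ∀ i k : ℕ, 1 ≤ i → i ≤ N - 1 → 1 ≤ k → k + 1 ≤ Nt →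
      ε (k + 1) i = (1 - lCoef γ 1 + σ i k * gCoef α N i i) * ε k i
        + (∑ s ∈ Finset.Icc 1 (k - 1), (lCoef γ s - lCoef γ (s + 1)) * ε (k - s) i)
        + σ i k * (∑ m ∈ (Finset.range (N + 1)).erase i, gCoef α N i m * ε k m)
        + R (k + 1) i) :
    (∀ k : ℕ, 1 ≤ k → k ≤ Nt →
      maxAbs N (ε k) ≤ Rmax / lCoef γ (k - 1) ∧
      Rmax / lCoef γ (k - 1) ≤ (k : ℝ) ^ γ / (1 - γ) * Rmax) ∧
    (∀ T C : ℝ, 0 < T → (Nt : ℝ) * τ ≤ T → 0 < C →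
      (∀ i k : ℕ, 1 ≤ i → i ≤ N - 1 → 1 ≤ k → k ≤ Nt →
        |R k i| ≤ C * τ ^ γ * (τ ^ (2 - γ) + Δx ^ 2)) →
      ∀ k : ℕ, k ≤ Nt →
        maxAbs N (ε k) ≤ C * T ^ γ / (1 - γ) * (τ ^ (2 - γ) + Δx ^ 2)) :=
  explicit_1d_convergence_general γ α hγ hα N Nt hNt τ Δx hτ hΔx c Cmax hc hstab σ hσ R Rmax hRmax ε
    hinit hbc hscheme0 hscheme
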